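/- Let p and q be coprime integers with p/q ∈ (0, 1/2), set ω = 2πp/q, s = sin(ω/2) and c = cos(ω/2). Let h₁ : ℝ → ℝ be smooth, 2π-periodic with μ{h₁′} ≡ 0, and let θ₁ be the unique smooth 2π-periodic solution of s·δ{θ₁} = δ{c·h₁} − σ{s·h₁′} with μ{θ₁} ≡ 0. Then the Fourier coefficients of θ₁ satisfy: θ̂₁,ₗ = 0 for all l ∈ qℤ, and for every l ∉ qℤ one has sin(lω/2) ≠ 0 and θ̂₁,ₗ = [ cos(ω/2)·sin(lω/2) − l·sin(ω/2)·cos(lω/2) ] / [ sin(ω/2)·sin(lω/2) ] · ĥ₁,ₗ. In particular θ̂₁,₁ = θ̂₁,₋₁ = 0. -/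

import Mathlib

open Real

/-- The average operator `μ{a}(t) = (1/q)·∑_{j=0}^{q−1} a(t + jω)`. -/
noncomputable def avgOp (q : ℕ) (ω : ℝ) (a : ℝ → ℝ) : ℝ → ℝ :=
  fun t => (1 / (q : ℝ)) * ∑ j ∈ Finset.range q, a (t + j * ω)

/-- The `l`-th Fourier coefficient of a real-valued `2π`-periodic function. -/
noncomputable def fourierCoeffR (a : ℝ → ℝ) (l : ℤ) : ℂ :=
  (1 / (2 * (π : ℂ))) * ∫ t in (0:ℝ)..(2 * π),
    (a t : ℂ) * Complex.exp (-Complex.I * l * t)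

/- ### Auxiliary definitions and lemmas -/

noncomputable def Fc (a : ℝ → ℝ) (l : ℤ) : ℂ :=
  ∫ t in (0:ℝ)..(2*π), (a t : ℂ) * Complex.exp (-Complex.I * l * t)

lemma fourierCoeffR_eq_Fc (a : ℝ → ℝ) (l : ℤ) :
    fourierCoeffR a l = (1 / (2 * (π : ℂ))) * Fc a l := rfl

lemma integrand_periodic (a : ℝ → ℝ) (l : ℤ) (hper : ∀ t, a (t + 2*π) = a t) :
    Function.Periodic (fun t => (a t : ℂ) * Complex.exp (-Complex.I * l * t)) (2*π) := by
  intro t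
  simp only [hper]
  congr 1
  rw [show -Complex.I * (l:ℂ) * ((t:ℝ) + 2*π : ℝ) = -Complex.I*l*t + (-l : ℤ) * (2*π*Complex.I) by
    push_cast; ring, Complex.exp_add, Complex.exp_int_mul_two_pi_mul_I, mul_one]

lemma Fc_shift (a : ℝ → ℝ) (l : ℤ) (ω : ℝ) (hper : ∀ t, a (t+2*π) = a t) :
    Fc (fun t => a (t + ω)) l = Complex.exp (Complex.I * l * ω) * Fc a l := by
  set g : ℝ → ℂ := fun t => (a t : ℂ) * Complex.exp (-Complex.I * l * t) with hg
  have h1 : ∀ t : ℝ, ((a (t+ω)) : ℂ) * Complex.exp (-Complex.I*l*t)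
      = Complex.exp (Complex.I*l*ω) * g (t+ω) := by
    intro t
    simp only [hg]
    rw [mul_left_comm, ← Complex.exp_add]
    congr 2
    push_cast; ring
  show (∫ t in (0:ℝ)..(2*π), ((a (t+ω)) : ℂ) * Complex.exp (-Complex.I*l*t)) = _
  rw [intervalIntegral.integral_congr (g := fun t => Complex.exp (Complex.I*l*ω) * g (t+ω))
    (fun t _ => h1 t)]
  rw [intervalIntegral.integral_const_mul]
  congr 1
  rw [intervalIntegral.integral_comp_add_right g ω]
  have hper' := integrand_periodic a l hper
  have h2 := hper'.intervalIntegral_add_eq ω 0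
  rw [show (0:ℝ) + ω = ω by ring, show (2:ℝ)*π + ω = ω + 2*π by ring, h2, zero_add]
  rfl

lemma Fc_const_mul (r : ℝ) (a : ℝ → ℝ) (l : ℤ) :
    Fc (fun t => r * a t) l = r * Fc a l := by
  unfold Fc
  rw [← intervalIntegral.integral_const_mul]
  congr 1; funext t; push_cast; ring

lemma Fc_sub (f g : ℝ → ℝ) (hf : Continuous f) (hg : Continuous g) (l : ℤ) :
    Fc (fun t => f t - g t) l = Fc f l - Fc g l := by
  unfold Fc
  have hif : IntervalIntegrable (fun t : ℝ => ((f t : ℝ) : ℂ) * Complex.exp (-Complex.I * l * t))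
      MeasureTheory.volume 0 (2*π) := Continuous.intervalIntegrable (by fun_prop) _ _
  have hig : IntervalIntegrable (fun t : ℝ => ((g t : ℝ) : ℂ) * Complex.exp (-Complex.I * l * t))
      MeasureTheory.volume 0 (2*π) := Continuous.intervalIntegrable (by fun_prop) _ _
  rw [intervalIntegral.integral_congr
    (g := fun t => ((f t : ℝ):ℂ) * Complex.exp (-Complex.I * l * t)
      - ((g t : ℝ):ℂ) * Complex.exp (-Complex.I * l * t)) (fun t _ => by push_cast; ring),
    intervalIntegral.integral_sub hif hig]

lemma Fc_add (f g : ℝ → ℝ) (hf : Continuous f) (hg : Continuous g) (l : ℤ) :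
    Fc (fun t => f t + g t) l = Fc f l + Fc g l := by
  unfold Fc
  have hif : IntervalIntegrable (fun t : ℝ => ((f t : ℝ) : ℂ) * Complex.exp (-Complex.I * l * t))
      MeasureTheory.volume 0 (2*π) := Continuous.intervalIntegrable (by fun_prop) _ _
  have hig : IntervalIntegrable (fun t : ℝ => ((g t : ℝ) : ℂ) * Complex.exp (-Complex.I * l * t))
      MeasureTheory.volume 0 (2*π) := Continuous.intervalIntegrable (by fun_prop) _ _
  rw [intervalIntegral.integral_congr
    (g := fun t => ((f t : ℝ):ℂ) * Complex.exp (-Complex.I * l * t)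
      + ((g t : ℝ):ℂ) * Complex.exp (-Complex.I * l * t)) (fun t _ => by push_cast; ring),
    intervalIntegral.integral_add hif hig]

lemma contDiff_deriv_cont {h : ℝ → ℝ} (hsm : ContDiff ℝ (⊤ : ℕ∞) h) : Continuous (deriv h) :=
  ((contDiff_infty_iff_deriv.mp ((contDiff_infty (𝕜 := ℝ) (f := h)).mpr
    (fun n => hsm.of_le (by exact_mod_cast le_top)))).2).continuous

lemma Fc_deriv (h : ℝ → ℝ) (hsm : ContDiff ℝ (⊤ : ℕ∞) h) (hper : ∀ t, h (t+2*π) = h t) (l : ℤ) :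
    Fc (deriv h) l = Complex.I * l * Fc h l := by
  have hdiff : Differentiable ℝ h := hsm.differentiable (by simp)
  have hdc : Continuous (deriv h) := contDiff_deriv_cont hsm
  set u : ℝ → ℂ := fun t => (h t : ℂ)
  set v : ℝ → ℂ := fun t => Complex.exp (-Complex.I * l * t)
  set u' : ℝ → ℂ := fun t => ((deriv h t : ℝ) : ℂ)
  set v' : ℝ → ℂ := fun t => (-Complex.I * l) * Complex.exp (-Complex.I * l * t)
  have hu : ∀ x ∈ Set.uIcc (0:ℝ) (2*π), HasDerivAt u (u' x) x := fun x _ =>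
    ((hdiff x).hasDerivAt).ofReal_comp
  have hv : ∀ x ∈ Set.uIcc (0:ℝ) (2*π), HasDerivAt v (v' x) x := by
    intro x _
    have h1 : HasDerivAt (fun t : ℝ => -Complex.I * l * t) (-Complex.I * l) x := by
      simpa using ((hasDerivAt_id x).ofReal_comp).const_mul (-Complex.I * (l:ℂ))
    have h2 := h1.cexp
    have h3 : Complex.exp (-Complex.I * (l:ℂ) * (x:ℝ)) * (-Complex.I * l)
        = -Complex.I * (l:ℂ) * Complex.exp (-Complex.I * l * x) := by ring
    rw [h3] at h2
    exact h2
  have hiu' : IntervalIntegrable u' MeasureTheory.volume 0 (2*π) :=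
    (Complex.continuous_ofReal.comp hdc).intervalIntegrable _ _
  have hiv' : IntervalIntegrable v' MeasureTheory.volume 0 (2*π) := by
    apply Continuous.intervalIntegrable; fun_prop
  have key := intervalIntegral.integral_deriv_mul_eq_sub hu hv hiu' hiv'
  have hbd : u (2*π) * v (2*π) - u 0 * v 0 = 0 := by
    have h20 : h (2*π) = h 0 := by simpa using hper 0
    have hev : v (2*π) = 1 := by
      show Complex.exp _ = 1
      rw [show -Complex.I * (l:ℂ) * ((2*π : ℝ):ℂ) = ((-l : ℤ):ℂ) * (2*π*Complex.I) by
        push_cast; ring, Complex.exp_int_mul_two_pi_mul_I]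
    rw [hev, mul_one]
    have hu2 : u (2*π) = u 0 := by simp [u, h20]
    have hv0 : v 0 = 1 := by simp [v]
    rw [hu2, hv0, mul_one, sub_self]
  rw [hbd] at key
  have hsplit : (∫ x in (0:ℝ)..(2*π), u' x * v x) + ∫ x in (0:ℝ)..(2*π), u x * v' x = 0 := by
    have hcu'v : Continuous (fun x => u' x * v x) :=
      (Complex.continuous_ofReal.comp hdc).mul (by fun_prop)
    have hcuv' : Continuous (fun x => u x * v' x) :=
      (Complex.continuous_ofReal.comp hsm.continuous).mul (by fun_prop)
    rw [← intervalIntegral.integral_add (hcu'v.intervalIntegrable _ _)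
      (hcuv'.intervalIntegrable _ _)]
    exact key
  have h2 : (∫ x in (0:ℝ)..(2*π), u x * v' x)
      = (-Complex.I * l) * ∫ x in (0:ℝ)..(2*π), u x * v x := by
    rw [← intervalIntegral.integral_const_mul]
    congr 1; funext x; simp [u, v, v']; ring
  rw [h2] at hsplit
  show (∫ x in (0:ℝ)..(2*π), u' x * v x) = Complex.I * l * ∫ x in (0:ℝ)..(2*π), u x * v x
  linear_combination hsplit

lemma Fc_avg (a : ℝ → ℝ) (ha : Continuous a) (hper : ∀ t, a (t+2*π) = a t)
    (q : ℕ) (ω : ℝ) (l : ℤ) :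
    Fc (avgOp q ω a) l
      = (1/(q:ℂ)) * (∑ j ∈ Finset.range q, Complex.exp (Complex.I*l*((j:ℝ)*ω))) * Fc a l := by
  have h1 : Fc (avgOp q ω a) l
      = ((1/(q:ℝ) : ℝ) : ℂ) * Fc (fun t => ∑ j ∈ Finset.range q, a (t + j*ω)) l := by
    rw [show avgOp q ω a = fun t => (1/(q:ℝ)) * ∑ j ∈ Finset.range q, a (t + j*ω) from rfl,
      Fc_const_mul]
  have h2 : Fc (fun t => ∑ j ∈ Finset.range q, a (t + j*ω)) l
      = ∑ j ∈ Finset.range q, Fc (fun t => a (t + (j:ℝ)*ω)) l := by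
    unfold Fc
    rw [intervalIntegral.integral_congr
      (g := fun t => ∑ j ∈ Finset.range q,
        ((a (t + (j:ℝ)*ω) : ℝ):ℂ) * Complex.exp (-Complex.I * l * t))
      (fun t _ => by push_cast [Finset.sum_mul]; ring_nf; exact Finset.sum_congr rfl (fun j _ => by ring_nf)),
      intervalIntegral.integral_finset_sum (fun j _ =>
        Continuous.intervalIntegrable (by fun_prop) _ _)]
  have h3 : ∀ j ∈ Finset.range q, Fc (fun t => a (t + (j:ℝ)*ω)) l
      = Complex.exp (Complex.I*l*((j:ℝ)*ω)) * Fc a l := by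
    intro j _
    rw [Fc_shift a l ((j:ℝ)*ω) hper]
    norm_cast
  rw [h1, h2, Finset.sum_congr rfl h3, ← Finset.sum_mul]
  push_cast
  ring

theorem stmt_14 (p q : ℕ) (hco : Nat.Coprime p q) (hp : 1 ≤ p) (hq : 2 * p < q)
    (ω s c : ℝ) (hω : ω = 2 * π * p / q)
    (hs : s = Real.sin (ω / 2)) (hc : c = Real.cos (ω / 2))
    (h₁ : ℝ → ℝ) (h₁sm : ContDiff ℝ (⊤ : ℕ∞) h₁) (h₁per : ∀ t, h₁ (t + 2 * π) = h₁ t)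
    (h₁avg : ∀ t, avgOp q ω (deriv h₁) t = 0)
    (θ₁ : ℝ → ℝ) (θ₁sm : ContDiff ℝ (⊤ : ℕ∞) θ₁) (θ₁per : ∀ t, θ₁ (t + 2 * π) = θ₁ t)
    (θ₁eq : ∀ t, s * (θ₁ (t + ω) - θ₁ t)
      = (c * h₁ (t + ω) - c * h₁ t) - (s * deriv h₁ (t + ω) + s * deriv h₁ t))
    (θ₁avg : ∀ t, avgOp q ω θ₁ t = 0) :
    (∀ l : ℤ, (q : ℤ) ∣ l → fourierCoeffR θ₁ l = 0) ∧
    (∀ l : ℤ, ¬ (q : ℤ) ∣ l →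
      Real.sin (l * ω / 2) ≠ 0 ∧
      fourierCoeffR θ₁ l
        = (((Real.cos (ω / 2) * Real.sin (l * ω / 2)
              - l * Real.sin (ω / 2) * Real.cos (l * ω / 2))
            / (Real.sin (ω / 2) * Real.sin (l * ω / 2)) : ℝ) : ℂ)
          * fourierCoeffR h₁ l) ∧
    fourierCoeffR θ₁ 1 = 0 ∧ fourierCoeffR θ₁ (-1) = 0 := by
  have hπ : (0:ℝ) < π := Real.pi_pos
  have hq3 : 3 ≤ q := by omega
  have hq0 : (q:ℝ) ≠ 0 := by positivity
  -- Part 1 : q ∣ l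
  have part1 : ∀ l : ℤ, (q : ℤ) ∣ l → fourierCoeffR θ₁ l = 0 := by
    intro l ⟨m, hm⟩
    have havg := Fc_avg θ₁ θ₁sm.continuous θ₁per q ω l
    have hzero : Fc (avgOp q ω θ₁) l = 0 := by
      unfold Fc
      have : ∀ t : ℝ, ((avgOp q ω θ₁ t : ℝ) : ℂ) * Complex.exp (-Complex.I * l * t) = 0 := by
        intro t; rw [θ₁avg t]; simp
      simp only [this, intervalIntegral.integral_zero]
    have hqC : (q:ℂ) ≠ 0 := Nat.cast_ne_zero.mpr (by omega)
    have hexp : ∀ j ∈ Finset.range q, Complex.exp (Complex.I*(l:ℂ)*((j:ℝ)*ω)) = 1 := by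
      intro j _
      rw [show Complex.I*(l:ℂ)*((j:ℝ)*ω) = ((m*j*p : ℤ):ℂ) * (2*π*Complex.I) by
        rw [hm, hω]; push_cast; field_simp]
      exact Complex.exp_int_mul_two_pi_mul_I _
    rw [Finset.sum_congr rfl hexp, Finset.sum_const, Finset.card_range, nsmul_eq_mul, mul_one,
      hzero] at havg
    have hFc : Fc θ₁ l = 0 := by
      rw [one_div, inv_mul_cancel₀ hqC, one_mul] at havg
      exact havg.symm
    rw [fourierCoeffR_eq_Fc, hFc, mul_zero]
  -- periodicity of deriv h₁
  have hdper : ∀ t, deriv h₁ (t + 2*π) = deriv h₁ t := by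
    intro t
    rw [← deriv_comp_add_const h₁ (2*π)]
    congr 1
    funext u; exact h₁per u
  have cθ : Continuous θ₁ := θ₁sm.continuous
  have ch : Continuous h₁ := h₁sm.continuous
  have cdh : Continuous (deriv h₁) := contDiff_deriv_cont h₁sm
  have hp0 : (0:ℝ) < p := by exact_mod_cast hp
  have hq0' : (0:ℝ) < q := by positivity
  have hs0 : s ≠ 0 := by
    rw [hs]
    apply ne_of_gt
    apply Real.sin_pos_of_pos_of_lt_pi
    · rw [hω]
      have : (0:ℝ) < 2*π*p/q := div_pos (by nlinarith) hq0'
      linarith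
    · rw [hω]
      have hpq : (p:ℝ) < q := by exact_mod_cast (by omega : p < q)
      have h1 : 2*π*(p:ℝ)/q/2 = π*((p:ℝ)/q) := by ring
      rw [h1]
      calc π*((p:ℝ)/q) < π*1 := by
            apply mul_lt_mul_of_pos_left _ hπ
            exact (div_lt_one hq0').mpr hpq
        _ = π := mul_one π
  have part2 : ∀ l : ℤ, ¬ (q : ℤ) ∣ l →
      Real.sin (l * ω / 2) ≠ 0 ∧
      fourierCoeffR θ₁ l
        = (((Real.cos (ω / 2) * Real.sin (l * ω / 2)
              - l * Real.sin (ω / 2) * Real.cos (l * ω / 2))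
            / (Real.sin (ω / 2) * Real.sin (l * ω / 2)) : ℝ) : ℂ)
          * fourierCoeffR h₁ l := by
    intro l hl
    set x : ℝ := (l:ℝ) * ω / 2 with hx
    have hsin : Real.sin x ≠ 0 := by
      intro h0
      obtain ⟨n, hn⟩ := Real.sin_eq_zero_iff.mp h0
      apply hl
      rw [hx, hω] at hn
      have hπ0 : π ≠ 0 := ne_of_gt hπ
      have h2 : (n:ℝ) * q = l * p := by
        field_simp at hn
        nlinarith [hn]
      have h3 : (n:ℤ) * q = l * p := by exact_mod_cast h2
      have h4 : (q:ℤ) ∣ p * l := ⟨n, by linarith⟩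
      exact Int.dvd_of_dvd_mul_right_of_gcd_one h4
        (by rw [Int.gcd_natCast_natCast]; exact hco.symm)
    refine ⟨hsin, ?_⟩
    set X := Fc θ₁ l with hX
    set Y := Fc h₁ l with hY
    set e : ℂ := Complex.exp (Complex.I * l * ω) with he
    have hθs : Fc (fun t => θ₁ (t+ω)) l = e * X := Fc_shift θ₁ l ω θ₁per
    have hhs : Fc (fun t => h₁ (t+ω)) l = e * Y := Fc_shift h₁ l ω h₁per
    have hdF : Fc (deriv h₁) l = Complex.I * l * Y := Fc_deriv h₁ h₁sm h₁per l
    have hds : Fc (fun t => deriv h₁ (t+ω)) l = e * (Complex.I * l * Y) := by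
      rw [Fc_shift (deriv h₁) l ω hdper, hdF]
    have hL : Fc (fun t => s * θ₁ (t+ω) - s * θ₁ t) l = (s:ℂ)*(e*X) - (s:ℂ)*X := by
      rw [Fc_sub (fun t => s * θ₁ (t+ω)) (fun t => s * θ₁ t) (by fun_prop) (by fun_prop) l,
        Fc_const_mul s (fun t => θ₁ (t+ω)) l, Fc_const_mul s θ₁ l, hθs, ← hX]
    have hR : Fc (fun t => (c * h₁ (t+ω) - c * h₁ t)
          - (s * deriv h₁ (t+ω) + s * deriv h₁ t)) l
        = ((c:ℂ)*(e*Y) - (c:ℂ)*Y) - ((s:ℂ)*(e*(Complex.I*l*Y)) + (s:ℂ)*(Complex.I*l*Y)) := by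
      rw [Fc_sub (fun t => c * h₁ (t+ω) - c * h₁ t)
        (fun t => s * deriv h₁ (t+ω) + s * deriv h₁ t) (by fun_prop) (by fun_prop) l,
        Fc_sub (fun t => c * h₁ (t+ω)) (fun t => c * h₁ t) (by fun_prop) (by fun_prop) l,
        Fc_add (fun t => s * deriv h₁ (t+ω)) (fun t => s * deriv h₁ t)
          (by fun_prop) (by fun_prop) l,
        Fc_const_mul c (fun t => h₁ (t+ω)) l, Fc_const_mul c h₁ l,
        Fc_const_mul s (fun t => deriv h₁ (t+ω)) l, Fc_const_mul s (deriv h₁) l,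
        hhs, hds, hdF, ← hY]
    have heqF : Fc (fun t => s * θ₁ (t+ω) - s * θ₁ t) l
        = Fc (fun t => (c * h₁ (t+ω) - c * h₁ t)
            - (s * deriv h₁ (t+ω) + s * deriv h₁ t)) l := by
      congr 1; funext t; linarith [θ₁eq t]
    have key : (s:ℂ)*(e*X) - (s:ℂ)*X
        = ((c:ℂ)*(e*Y) - (c:ℂ)*Y) - ((s:ℂ)*(e*(Complex.I*l*Y)) + (s:ℂ)*(Complex.I*l*Y)) := by
      rw [← hL, heqF, hR]
    have he2 : e = Complex.cos ((2*x : ℝ)) + Complex.sin ((2*x : ℝ)) * Complex.I := by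
      rw [he, show Complex.I*(l:ℂ)*(ω:ℂ) = ((2*x : ℝ) : ℂ) * Complex.I by
        rw [hx]; push_cast; ring, Complex.exp_mul_I]
    have hkey : (Real.cos x : ℂ) * (e - 1) = Complex.I * (Real.sin x : ℂ) * (e + 1) := by
      rw [he2]
      push_cast
      rw [Complex.cos_two_mul, Complex.sin_two_mul]
      linear_combination (2*Complex.cos (x:ℂ)) * Complex.sin_sq_add_cos_sq (x:ℂ)
        + (-2*Complex.sin (x:ℂ)^2*Complex.cos (x:ℂ)) * Complex.I_sq
    have hene : e - 1 ≠ 0 := by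
      intro h0
      have he1 : e = 1 := by linear_combination h0
      rw [he1] at hkey
      have h2 : Complex.I * (Real.sin x : ℂ) * 2 = 0 := by linear_combination -hkey
      have h3 : (Real.sin x : ℂ) = 0 := by
        simpa [Complex.I_ne_zero] using h2
      exact hsin (by exact_mod_cast h3)
    have hclaim : ((s * Real.sin x : ℝ):ℂ) * X * (e-1)
        = ((c * Real.sin x - l * s * Real.cos x : ℝ):ℂ) * Y * (e-1) := by
      have hkey' := hkey
      push_cast at hkey' ⊢
      linear_combination (Complex.sin (x:ℂ)) * key + ((s:ℂ) * (l:ℂ) * Y) * hkey'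
    have h5 : ((s * Real.sin x : ℝ):ℂ) * X
        = ((c * Real.sin x - l * s * Real.cos x : ℝ):ℂ) * Y :=
      mul_right_cancel₀ hene hclaim
    have hd : ((s * Real.sin x : ℝ):ℂ) ≠ 0 :=
      Complex.ofReal_ne_zero.mpr (mul_ne_zero hs0 hsin)
    have h6 : X = (((c * Real.sin x - l * s * Real.cos x)/(s * Real.sin x) : ℝ):ℂ) * Y := by
      rw [Complex.ofReal_div, div_mul_eq_mul_div, eq_div_iff hd]
      linear_combination h5
    rw [fourierCoeffR_eq_Fc, fourierCoeffR_eq_Fc, ← hX, ← hY, ← hs, ← hc, h6]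
    ring
  have hnd1 : ¬ (q:ℤ) ∣ 1 := by
    intro hd
    have := Int.le_of_dvd one_pos hd
    omega
  have hnd1' : ¬ (q:ℤ) ∣ (-1) := fun hd => hnd1 ((dvd_neg).mp hd)
  refine ⟨part1, part2, ?_, ?_⟩
  · obtain ⟨-, h1e⟩ := part2 1 hnd1
    rw [h1e]
    have hz : (((Real.cos (ω / 2) * Real.sin ((1:ℤ) * ω / 2)
              - (1:ℤ) * Real.sin (ω / 2) * Real.cos ((1:ℤ) * ω / 2))
            / (Real.sin (ω / 2) * Real.sin ((1:ℤ) * ω / 2)) : ℝ)) = 0 := by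
      push_cast
      simp only [one_mul]
      rw [show Real.cos (ω/2) * Real.sin (ω/2) - Real.sin (ω/2) * Real.cos (ω/2) = 0 by ring]
      simp
    rw [hz]
    simp
  · obtain ⟨-, h1e⟩ := part2 (-1) hnd1'
    rw [h1e]
    have hz : (((Real.cos (ω / 2) * Real.sin ((-1:ℤ) * ω / 2)
              - (-1:ℤ) * Real.sin (ω / 2) * Real.cos ((-1:ℤ) * ω / 2))
            / (Real.sin (ω / 2) * Real.sin ((-1:ℤ) * ω / 2)) : ℝ)) = 0 := by
      push_cast
      rw [show (-1:ℝ)*ω/2 = -(ω/2) by ring, Real.sin_neg, Real.cos_neg]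
      rw [show Real.cos (ω/2) * -Real.sin (ω/2) - -1 * Real.sin (ω/2) * Real.cos (ω/2) = 0 by ring]
      simp
    rw [hz]
    simp
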